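/- Let n be an odd positive integer. For the Hadamard walk on the n-cycle, for every unit initial state ψ₀ and every node v ∈ ℤ/nℤ, the time-averaged node distribution converges to the uniform distribution: lim_{T→∞} (1/T)·Σ_{t=0}^{T−1} P_t(v | ψ₀) = 1/n, independently of the initial state ψ₀. -/

import Mathlib

/-!
A plane wave `v ↦ χ(k v) z`, with `χ` the standard character of `ZMod n`, is mapped by the step to
the plane wave with amplitude `S_k z`, where `S_k` is a `2 × 2` symbol whose eigenvalues are the two
unimodular roots of `λ² - τ_k λ - 1` with `τ_k = -i √2 Im χ(k)`. Expanding the initial state in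
Fourier modes and each amplitude in eigenvectors of `S_k` writes `ψ_t(v)` as a sum of
`λ_j ^ t • w_j(v)` over the `2n` pairs `j = (k, ±)`. For odd `n` the `λ_j` are pairwise distinct,
so in the time average of `‖ψ_t(v)‖²` all cross terms vanish, leaving `∑ ‖w_j(v)‖²`, which does not
depend on `v` since `|χ| = 1`. As the walk conserves `∑_v ‖ψ_t(v)‖² = 1`, this common limit is `1/n`.
-/

open Filter Topology

/-- One step of the Hadamard walk on the n-cycle: states are `ψ : ZMod n → ℂ × ℂ` with
`ψ v = (ψ_L v, ψ_R v)`, and `ψ'_L(v) = (ψ_R(v+1) − ψ_L(v+1))/√2`,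
`ψ'_R(v) = (ψ_R(v−1) + ψ_L(v−1))/√2`. -/
noncomputable def cycleHadamardStep (n : ℕ) (ψ : ZMod n → ℂ × ℂ) : ZMod n → ℂ × ℂ :=
  fun v =>
    (((ψ (v + 1)).2 - (ψ (v + 1)).1) / (Real.sqrt 2 : ℂ),
     ((ψ (v - 1)).2 + (ψ (v - 1)).1) / (Real.sqrt 2 : ℂ))

section CesaroMean

variable {E : Type*}

noncomputable def cesaroMean [AddCommMonoid E] [Module ℝ E] (u : ℕ → E) (T : ℕ) : E :=
  (T : ℝ)⁻¹ • ∑ t ∈ Finset.range T, u t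

lemma cesaroMean_add [AddCommMonoid E] [Module ℝ E] (u w : ℕ → E) (T : ℕ) :
    cesaroMean (fun t => u t + w t) T = cesaroMean u T + cesaroMean w T := by
  simp only [cesaroMean, Finset.sum_add_distrib, smul_add]

lemma cesaroMean_sum {ι : Type*} [AddCommMonoid E] [Module ℝ E] (s : Finset ι) (u : ι → ℕ → E)
    (T : ℕ) : cesaroMean (fun t => ∑ i ∈ s, u i t) T = ∑ i ∈ s, cesaroMean (u i) T := by
  simp only [cesaroMean, Finset.smul_sum]
  exact Finset.sum_comm

lemma cesaroMean_const [AddCommGroup E] [Module ℝ E] (c : E) {T : ℕ} (hT : T ≠ 0) :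
    cesaroMean (fun _ => c) T = c := by
  rw [cesaroMean, Finset.sum_const, Finset.card_range, ← Nat.cast_smul_eq_nsmul ℝ, smul_smul,
    inv_mul_cancel₀ (Nat.cast_ne_zero.mpr hT), one_smul]

lemma cesaroMean_mul_const (u : ℕ → ℂ) (c : ℂ) (T : ℕ) :
    cesaroMean (fun t => u t * c) T = cesaroMean u T * c := by
  simp only [cesaroMean, ← Finset.sum_mul, smul_mul_assoc]

lemma cesaroMean_ofReal (u : ℕ → ℝ) (T : ℕ) :
    cesaroMean (fun t => (u t : ℂ)) T = cesaroMean u T := by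
  simp [cesaroMean, Complex.ofReal_sum]

lemma tendsto_cesaroMean_pow {μ : ℂ} (hμ : ‖μ‖ ≤ 1) :
    Tendsto (cesaroMean (μ ^ ·)) atTop (𝓝 (if μ = 1 then 1 else 0)) := by
  split_ifs with h1
  · subst h1
    refine tendsto_const_nhds.congr' ?_
    filter_upwards [eventually_ne_atTop 0] with T hT
    simp only [one_pow, cesaroMean_const _ hT]
  have hbound : ∀ T : ℕ, ‖cesaroMean (μ ^ ·) T‖ ≤ 2 / ‖μ - 1‖ * (T : ℝ)⁻¹ := fun T => by
    rw [cesaroMean, norm_smul, geom_sum_eq h1, norm_div, norm_inv, Real.norm_natCast, mul_comm]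
    gcongr
    calc ‖μ ^ T - 1‖ ≤ ‖μ ^ T‖ + ‖(1 : ℂ)‖ := norm_sub_le _ _
      _ ≤ 2 := by rw [norm_pow, norm_one]; linarith [pow_le_one₀ (norm_nonneg μ) hμ (n := T)]
  exact squeeze_zero_norm hbound
    (by simpa using tendsto_inv_atTop_nhds_zero_nat.const_mul (2 / ‖μ - 1‖))

open ComplexConjugate in
lemma Complex.conj_mul_eq_one_iff {a : ℂ} (ha : ‖a‖ = 1) (b : ℂ) : conj a * b = 1 ↔ a = b := by
  rw [← Complex.inv_eq_conj ha, inv_mul_eq_one₀ (norm_ne_zero_iff.mp (by simp [ha]))]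

open ComplexConjugate in
theorem tendsto_cesaroMean_norm_sq_sum_pow_smul {ι : Type*} [Fintype ι] [NormedAddCommGroup E]
    [InnerProductSpace ℂ E] {μ : ι → ℂ} (hμ : Function.Injective μ) (hμ1 : ∀ i, ‖μ i‖ = 1)
    (w : ι → E) :
    Tendsto (cesaroMean fun t => ‖∑ i, μ i ^ t • w i‖ ^ 2) atTop (𝓝 (∑ i, ‖w i‖ ^ 2)) := by
  classical
  rw [← Filter.tendsto_ofReal_iff]
  have hexpand : ∀ t, ((‖∑ i, μ i ^ t • w i‖ ^ 2 : ℝ) : ℂ)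
      = ∑ i, ∑ j, (conj (μ i) * μ j) ^ t * inner ℂ (w i) (w j) := fun t => by
    push_cast
    refine (inner_self_eq_norm_sq_to_K (𝕜 := ℂ) (∑ i, μ i ^ t • w i)).symm.trans ?_
    rw [sum_inner]
    simp only [inner_sum, inner_smul_left, inner_smul_right, mul_pow, map_pow, mul_assoc,
      mul_left_comm]
  have hlim : ∑ i, ((‖w i‖ ^ 2 : ℝ) : ℂ)
      = ∑ i, ∑ j, (if conj (μ i) * μ j = 1 then 1 else 0) * inner ℂ (w i) (w j) := by
    simp [Complex.conj_mul_eq_one_iff (hμ1 _), hμ.eq_iff, inner_self_eq_norm_sq_to_K]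
  simp only [← cesaroMean_ofReal, hexpand, cesaroMean_sum, cesaroMean_mul_const]
  rw [Complex.ofReal_sum, hlim]
  refine tendsto_finsetSum _ fun i _ => tendsto_finsetSum _ fun j _ => ?_
  exact (tendsto_cesaroMean_pow (by simp [hμ1])).mul_const _

end CesaroMean

lemma card_mul_eq_one_of_tendsto {ι : Type*} [Fintype ι] {f : ℕ → ι → ℝ} {L : ℝ}
    (hf : ∀ i, Tendsto (fun T => f T i) atTop (𝓝 L)) (hsum : ∀ᶠ T in atTop, ∑ i, f T i = 1) :
    (Fintype.card ι : ℝ) * L = 1 := by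
  have hlim := tendsto_finsetSum Finset.univ fun i _ => hf i
  rw [Finset.sum_const, Finset.card_univ, nsmul_eq_mul] at hlim
  exact tendsto_nhds_unique hlim (tendsto_const_nhds.congr' (hsum.mono fun _ h => h.symm))

lemma sum_comp_add_right {G M : Type*} [AddGroup G] [Fintype G] [AddCommMonoid M] (f : G → M)
    (c : G) : ∑ v, f (v + c) = ∑ v, f v :=
  Equiv.sum_comp (Equiv.addRight c) f

lemma sum_comp_sub_right {G M : Type*} [AddGroup G] [Fintype G] [AddCommMonoid M] (f : G → M)
    (c : G) : ∑ v, f (v - c) = ∑ v, f v :=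
  Equiv.sum_comp (Equiv.subRight c) f

theorem Module.End.pow_apply_eq_of_apply_apply {K V : Type*} [Field K] [AddCommGroup V]
    [Module K V] {S : Module.End K V} {α β : K} (hαβ : α ≠ β)
    (hS : ∀ z, S (S z) = (α + β) • S z - (α * β) • z) (t : ℕ) (z : V) :
    (S ^ t) z = α ^ t • (α - β)⁻¹ • (S z - β • z) + β ^ t • (β - α)⁻¹ • (S z - α • z) := by
  have hinv : (α - β)⁻¹ * (α - β) = 1 := inv_mul_cancel₀ (sub_ne_zero.mpr hαβ)
  rw [← neg_sub α β, inv_neg]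
  induction t with
  | zero =>
    rw [pow_zero, Module.End.one_apply]
    linear_combination (norm := module) -hinv • z
  | succ t ih =>
    rw [pow_succ', Module.End.mul_apply, ih]
    simp only [map_add, map_smul, map_sub, hS]
    module

section HadamardWalk

open ComplexConjugate ZMod Function

variable {n : ℕ} [NeZero n]

noncomputable def coinNormSq (z : ℂ × ℂ) : ℝ := ‖z.1‖ ^ 2 + ‖z.2‖ ^ 2

lemma coinNormSq_smul (c : ℂ) (z : ℂ × ℂ) : coinNormSq (c • z) = ‖c‖ ^ 2 * coinNormSq z := by
  simp only [coinNormSq, Prod.smul_fst, Prod.smul_snd, smul_eq_mul, norm_mul]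
  ring

theorem tendsto_cesaroMean_coinNormSq_sum_pow_smul {ι : Type*} [Fintype ι] {μ : ι → ℂ}
    (hμ : Injective μ) (hμ1 : ∀ i, ‖μ i‖ = 1) (w : ι → ℂ × ℂ) :
    Tendsto (cesaroMean fun t => coinNormSq (∑ i, μ i ^ t • w i)) atTop
      (𝓝 (∑ i, coinNormSq (w i))) := by
  have hfst := tendsto_cesaroMean_norm_sq_sum_pow_smul hμ hμ1 fun i => (w i).1
  have hsnd := tendsto_cesaroMean_norm_sq_sum_pow_smul hμ hμ1 fun i => (w i).2
  convert hfst.add hsnd using 1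
  · funext T
    rw [← cesaroMean_add]
    simp only [coinNormSq, Prod.fst_sum, Prod.snd_sum, Prod.smul_fst, Prod.smul_snd]
  · simp only [coinNormSq, Finset.sum_add_distrib]

lemma sum_coinNormSq_cycleHadamardStep (ψ : ZMod n → ℂ × ℂ) :
    ∑ v, coinNormSq (cycleHadamardStep n ψ v) = ∑ v, coinNormSq (ψ v) := by
  have hsq : ‖(Real.sqrt 2 : ℂ)‖ ^ 2 = 2 := by simp
  simp only [coinNormSq, cycleHadamardStep, norm_div, div_pow, hsq, Finset.sum_add_distrib]
  rw [sum_comp_add_right (fun v => ‖(ψ v).2 - (ψ v).1‖ ^ 2 / 2),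
    sum_comp_sub_right (fun v => ‖(ψ v).2 + (ψ v).1‖ ^ 2 / 2),
    ← Finset.sum_add_distrib, ← Finset.sum_add_distrib]
  refine Finset.sum_congr rfl fun v _ => ?_
  linarith [parallelogram_law_with_norm ℂ (ψ v).2 (ψ v).1]

lemma sum_coinNormSq_iterate_cycleHadamardStep (ψ : ZMod n → ℂ × ℂ) (t : ℕ) :
    ∑ v, coinNormSq ((cycleHadamardStep n)^[t] ψ v) = ∑ v, coinNormSq (ψ v) := by
  induction t with
  | zero => rfl
  | succ t ih => rw [Function.iterate_succ_apply', sum_coinNormSq_cycleHadamardStep, ih]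

noncomputable def hadamardSymbol (a : ℂ) : Module.End ℂ (ℂ × ℂ) where
  toFun z := (a * (z.2 - z.1) / Real.sqrt 2, conj a * (z.1 + z.2) / Real.sqrt 2)
  map_add' z w := by ext <;> simp only [Prod.fst_add, Prod.snd_add] <;> ring
  map_smul' c z := by
    ext <;> simp only [Prod.smul_fst, Prod.smul_snd, smul_eq_mul, RingHom.id_apply] <;> ring

lemma hadamardSymbol_apply (a : ℂ) (z : ℂ × ℂ) :
    hadamardSymbol a z = (a * (z.2 - z.1) / Real.sqrt 2, conj a * (z.1 + z.2) / Real.sqrt 2) :=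
  rfl

lemma cycleHadamardStep_invDFT (z : ZMod n → ℂ × ℂ) :
    cycleHadamardStep n (𝓕⁻ z) = 𝓕⁻ fun k => hadamardSymbol (stdAddChar k) (z k) := by
  funext v
  simp only [cycleHadamardStep, invDFT_apply, hadamardSymbol_apply]
  ext <;> simp only [Prod.smul_fst, Prod.smul_snd, Prod.fst_sum, Prod.snd_sum, smul_eq_mul,
    Finset.mul_sum, ← Finset.sum_sub_distrib, ← Finset.sum_add_distrib, Finset.sum_div] <;>
    refine Finset.sum_congr rfl fun k _ => ?_
  · rw [mul_add, mul_one, AddChar.map_add_eq_mul]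
    ring
  · rw [mul_sub, mul_one, sub_eq_add_neg, AddChar.map_add_eq_mul, AddChar.map_neg_eq_conj]
    ring

lemma iterate_cycleHadamardStep_invDFT (z : ZMod n → ℂ × ℂ) (t : ℕ) :
    (cycleHadamardStep n)^[t] (𝓕⁻ z) = 𝓕⁻ fun k => (hadamardSymbol (stdAddChar k) ^ t) (z k) := by
  induction t with
  | zero => rfl
  | succ t ih =>
    rw [Function.iterate_succ_apply', ih, cycleHadamardStep_invDFT]
    simp only [pow_succ', Module.End.mul_apply]

-- For `‖a‖ = 1`: the two unimodular roots `±√(1 - s²) - i s`, `s = Im a / √2`, of the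
-- characteristic polynomial `λ² - ((conj a - a) / √2) λ - 1` of `hadamardSymbol a`.
noncomputable def hadamardEigenvalue (a : ℂ) (b : Bool) : ℂ :=
  ⟨(if b then 1 else -1) * √(1 - (a.im / √2) ^ 2), -(a.im / √2)⟩

lemma hadamardEigenvalue_re (a : ℂ) (b : Bool) :
    (hadamardEigenvalue a b).re = (if b then 1 else -1) * √(1 - (a.im / √2) ^ 2) :=
  rfl

lemma hadamardEigenvalue_im (a : ℂ) (b : Bool) : (hadamardEigenvalue a b).im = -(a.im / √2) :=
  rfl

lemma sq_im_div_sqrt_two_lt_one {a : ℂ} (ha : ‖a‖ = 1) : (a.im / √2) ^ 2 < 1 := by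
  have him : |a.im| ≤ 1 := ha ▸ Complex.abs_im_le_norm a
  rw [div_pow, Real.sq_sqrt zero_le_two, div_lt_one two_pos]
  nlinarith [abs_nonneg a.im, sq_abs a.im]

lemma hadamardEigenvalue_true_add_false (a : ℂ) :
    hadamardEigenvalue a true + hadamardEigenvalue a false = (conj a - a) / √2 := by
  apply Complex.ext <;>
    simp only [Complex.add_re, Complex.add_im, hadamardEigenvalue_re, hadamardEigenvalue_im,
      Complex.div_ofReal_re, Complex.div_ofReal_im, Complex.sub_re, Complex.sub_im,
      Complex.conj_re, Complex.conj_im, ↓reduceIte, Bool.false_eq_true] <;>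
    ring

lemma hadamardEigenvalue_true_mul_false {a : ℂ} (ha : ‖a‖ = 1) :
    hadamardEigenvalue a true * hadamardEigenvalue a false = -1 := by
  have hc := Real.sq_sqrt (sub_nonneg.mpr (sq_im_div_sqrt_two_lt_one ha).le)
  apply Complex.ext <;>
    simp only [Complex.mul_re, Complex.mul_im, hadamardEigenvalue_re, hadamardEigenvalue_im,
      Complex.neg_re, Complex.neg_im, Complex.one_re, Complex.one_im, ↓reduceIte,
      Bool.false_eq_true]
  · linear_combination (-1) * hc
  · ring

lemma norm_hadamardEigenvalue {a : ℂ} (ha : ‖a‖ = 1) (b : Bool) :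
    ‖hadamardEigenvalue a b‖ = 1 := by
  have hc := Real.sq_sqrt (sub_nonneg.mpr (sq_im_div_sqrt_two_lt_one ha).le)
  rw [Complex.norm_def, Real.sqrt_eq_one, Complex.normSq_apply]
  simp only [hadamardEigenvalue_re, hadamardEigenvalue_im]
  cases b <;> simp only [↓reduceIte, Bool.false_eq_true] <;> linear_combination hc

lemma hadamardEigenvalue_true_ne_false {a : ℂ} (ha : ‖a‖ = 1) :
    hadamardEigenvalue a true ≠ hadamardEigenvalue a false := by
  have hc : 0 < √(1 - (a.im / √2) ^ 2) :=
    Real.sqrt_pos.mpr (sub_pos.mpr (sq_im_div_sqrt_two_lt_one ha))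
  intro h
  have hre := congrArg Complex.re h
  simp only [hadamardEigenvalue_re, ↓reduceIte, Bool.false_eq_true] at hre
  linarith

lemma hadamardSymbol_apply_apply {a : ℂ} (ha : ‖a‖ = 1) (z : ℂ × ℂ) :
    hadamardSymbol a (hadamardSymbol a z) =
      (hadamardEigenvalue a true + hadamardEigenvalue a false) • hadamardSymbol a z
        - (hadamardEigenvalue a true * hadamardEigenvalue a false) • z := by
  have hconj : conj a * a = 1 := by
    rw [Complex.conj_mul', ha]; norm_num
  have hs : (√2 : ℂ) ^ 2 = 2 := by norm_cast; simp
  rw [hadamardEigenvalue_true_add_false, hadamardEigenvalue_true_mul_false ha]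
  simp only [hadamardSymbol_apply]
  ext <;> simp only [Prod.smul_fst, Prod.smul_snd, Prod.fst_sub, Prod.snd_sub, smul_eq_mul] <;>
    field_simp
  · linear_combination 2 * z.1 * hconj - z.1 * hs
  · linear_combination 2 * z.2 * hconj - z.2 * hs

noncomputable def hadamardEigencomponent (a : ℂ) (b : Bool) (z : ℂ × ℂ) : ℂ × ℂ :=
  (hadamardEigenvalue a b - hadamardEigenvalue a (!b))⁻¹ •
    (hadamardSymbol a z - hadamardEigenvalue a (!b) • z)

lemma hadamardSymbol_pow_apply {a : ℂ} (ha : ‖a‖ = 1) (t : ℕ) (z : ℂ × ℂ) :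
    (hadamardSymbol a ^ t) z = ∑ b, hadamardEigenvalue a b ^ t • hadamardEigencomponent a b z := by
  rw [Fintype.sum_bool]
  exact Module.End.pow_apply_eq_of_apply_apply (hadamardEigenvalue_true_ne_false ha)
    (hadamardSymbol_apply_apply ha) t z

lemma stdAddChar_ne_neg_one (hodd : Odd n) (m : ZMod n) : stdAddChar m ≠ -1 := by
  intro h
  have hpow := AddChar.map_nsmul_eq_pow (stdAddChar (N := n)) n m
  rw [nsmul_eq_mul, ZMod.natCast_self, zero_mul, AddChar.map_zero_eq_one, h,
    hodd.neg_one_pow] at hpow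
  norm_num at hpow

lemma injective_im_stdAddChar (hodd : Odd n) : Injective fun k : ZMod n => (stdAddChar k).im := by
  intro k k' him
  simp only at him
  have hnorm : ∀ m : ZMod n, (stdAddChar m).re ^ 2 + (stdAddChar m).im ^ 2 = 1 := fun m => by
    have h := congrArg (· ^ 2) (AddChar.norm_apply (stdAddChar (N := n)) m)
    simp only [Complex.sq_norm, Complex.normSq_apply] at h
    linear_combination h
  have hk := hnorm k
  rw [him] at hk
  have hre2 : (stdAddChar k).re ^ 2 = (stdAddChar k').re ^ 2 := by
    linear_combination hk - hnorm k'
  rcases sq_eq_sq_iff_eq_or_eq_neg.mp hre2 with hre | hre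
  · exact injective_stdAddChar (Complex.ext hre him)
  -- otherwise `χ k' = -conj (χ k)`, so `χ (k + k') = -1`
  · refine absurd ?_ (stdAddChar_ne_neg_one hodd (k + k'))
    rw [AddChar.map_add_eq_mul]
    apply Complex.ext <;> simp only [Complex.mul_re, Complex.mul_im, Complex.neg_re,
      Complex.neg_im, Complex.one_re, Complex.one_im, hre, him]
    · linear_combination -(hnorm k')
    · ring

lemma injective_hadamardEigenvalue_stdAddChar (hodd : Odd n) :
    Injective fun j : ZMod n × Bool => hadamardEigenvalue (stdAddChar j.1) j.2 := by
  rintro ⟨k, b⟩ ⟨k', b'⟩ h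
  have him := congrArg Complex.im h
  simp only [hadamardEigenvalue_im] at him
  have hk : k = k' := injective_im_stdAddChar hodd <| by
    rwa [neg_inj, div_left_inj' (by positivity)] at him
  subst hk
  have hne := hadamardEigenvalue_true_ne_false (AddChar.norm_apply (stdAddChar (N := n)) k)
  cases b <;> cases b' <;> first | rfl | exact absurd h hne | exact absurd h.symm hne

lemma iterate_cycleHadamardStep_apply (ψ₀ : ZMod n → ℂ × ℂ) (t : ℕ) (v : ZMod n) :
    (cycleHadamardStep n)^[t] ψ₀ v = ∑ j : ZMod n × Bool,
      hadamardEigenvalue (stdAddChar j.1) j.2 ^ t • (((n : ℂ)⁻¹ * stdAddChar (j.1 * v)) •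
        hadamardEigencomponent (stdAddChar j.1) j.2 (𝓕 ψ₀ j.1)) := by
  rw [← dft.symm_apply_apply ψ₀, iterate_cycleHadamardStep_invDFT, invDFT_apply,
    dft.symm_apply_apply, Fintype.sum_prod_type, Finset.smul_sum]
  refine Finset.sum_congr rfl fun k _ => ?_
  rw [hadamardSymbol_pow_apply (AddChar.norm_apply _ k), Finset.smul_sum, Finset.smul_sum]
  refine Finset.sum_congr rfl fun b _ => ?_
  module

theorem exists_tendsto_cesaroMean_coinNormSq (hodd : Odd n) (ψ₀ : ZMod n → ℂ × ℂ) :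
    ∃ L, ∀ v, Tendsto (cesaroMean fun t => coinNormSq ((cycleHadamardStep n)^[t] ψ₀ v)) atTop
      (𝓝 L) := by
  refine ⟨∑ j : ZMod n × Bool, coinNormSq ((n : ℂ)⁻¹ •
    hadamardEigencomponent (stdAddChar j.1) j.2 (𝓕 ψ₀ j.1)), fun v => ?_⟩
  simp only [iterate_cycleHadamardStep_apply]
  convert tendsto_cesaroMean_coinNormSq_sum_pow_smul (injective_hadamardEigenvalue_stdAddChar hodd)
    (fun j => norm_hadamardEigenvalue (AddChar.norm_apply _ _) _) _ using 3 with j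
  rw [coinNormSq_smul, coinNormSq_smul, norm_mul, AddChar.norm_apply, mul_one]

end HadamardWalk

theorem cycle_hadamard_time_averaged_uniform
    (n : ℕ) [NeZero n] (hodd : Odd n)
    (ψ₀ : ZMod n → ℂ × ℂ)
    (hunit : ∑ v : ZMod n, (‖(ψ₀ v).1‖ ^ 2 + ‖(ψ₀ v).2‖ ^ 2) = 1) :
    ∀ v : ZMod n,
      Tendsto (fun T : ℕ =>
          (T : ℝ)⁻¹ * ∑ t ∈ Finset.range T,
            (‖((cycleHadamardStep n)^[t] ψ₀ v).1‖ ^ 2 +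
              ‖((cycleHadamardStep n)^[t] ψ₀ v).2‖ ^ 2))
        atTop (𝓝 (1 / (n : ℝ))) := by
  obtain ⟨L, hL⟩ := exists_tendsto_cesaroMean_coinNormSq hodd ψ₀
  have hmass : ∀ T ≠ 0,
      ∑ v, cesaroMean (fun t => coinNormSq ((cycleHadamardStep n)^[t] ψ₀ v)) T = 1 := by
    intro T hT
    rw [← cesaroMean_sum]
    simp only [sum_coinNormSq_iterate_cycleHadamardStep]
    exact (cesaroMean_const _ hT).trans hunit
  have hnL : (n : ℝ) * L = 1 := by
    simpa using card_mul_eq_one_of_tendsto hL ((eventually_ne_atTop 0).mono hmass)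
  rw [← eq_one_div_of_mul_eq_one_right hnL]
  exact hL
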